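/- Let V be a finite type and let F be a nonempty superset-closed family of finsets of V, and let S be a member of F with S ≠ Finset.univ. Then the subgraph of the TAR graph of F induced on F \ {S} is connected; consequently, the only possible cut-vertex of the TAR graph of F is the full vertex set Finset.univ. -/

import Mathlib

variable {V : Type*} [Fintype V] [DecidableEq V]

/-- A family of finsets is superset-closed if it is closed under taking supersets. -/
def SupersetClosed (F : Finset (Finset V)) : Prop :=
  ∀ ⦃S T : Finset V⦄, S ∈ F → S ⊆ T → T ∈ F

/-- A minimal member of a family: a member no proper subset of which is a member. -/
def IsMinimalMem (F : Finset (Finset V)) (M : Finset V) : Prop :=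
  M ∈ F ∧ ∀ M' : Finset V, M' ⊂ M → M' ∉ F

/-- The TAR graph of a family of finsets: vertices are the members of the family,
two members being adjacent iff their symmetric difference has exactly one element. -/
def TARGraph (F : Finset (Finset V)) : SimpleGraph {S : Finset V // S ∈ F} where
  Adj S T := (symmDiff S.1 T.1).card = 1
  symm := by
    constructor
    intro S T h
    change (symmDiff S.1 T.1).card = 1 at h
    change (symmDiff T.1 S.1).card = 1
    rwa [symmDiff_comm] at h
  loopless := ⟨fun S (h : (symmDiff S.1 S.1).card = 1) => by simp [symmDiff_self] at h⟩

instance (F : Finset (Finset V)) : DecidableRel (TARGraph F).Adj :=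
  fun S T => inferInstanceAs (Decidable ((symmDiff S.1 T.1).card = 1))

/-- The subgraph of the TAR graph of `F` induced on `F` with the member `S` removed. -/
def TARGraphDel (F : Finset (Finset V)) (S : Finset V) :
    SimpleGraph {T : Finset V // T ∈ F ∧ T ≠ S} where
  Adj A B := (symmDiff A.1 B.1).card = 1
  symm := by
    constructor
    intro A B h
    change (symmDiff A.1 B.1).card = 1 at h
    change (symmDiff B.1 A.1).card = 1
    rwa [symmDiff_comm] at h
  loopless := ⟨fun A (h : (symmDiff A.1 A.1).card = 1) => by simp [symmDiff_self] at h⟩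

/-!
Every member `T ≠ S` of `F` can be joined to `Finset.univ` avoiding `S`. If `T ⊄ S`, add the
missing elements one at a time: each intermediate set contains `T`, so it lies in `F` and is not
`S`. If `T ⊊ S`, first add one element outside `S`, which exists because `S ≠ univ`.
-/

open Finset

theorem Finset.card_symmDiff_insert_self {α : Type*} [DecidableEq α] {s : Finset α} {a : α}
    (ha : a ∉ s) : #(symmDiff (insert a s) s) = 1 := by
  rw [symmDiff_of_ge (subset_insert a s), insert_sdiff_cancel ha, card_singleton]

namespace TARGraphDel

variable {F : Finset (Finset V)} {S : Finset V}

def insertVertex (hsup : SupersetClosed F) (T : {T : Finset V // T ∈ F ∧ T ≠ S}) (a : V)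
    (haS : ¬insert a T.1 ⊆ S) : {T : Finset V // T ∈ F ∧ T ≠ S} :=
  ⟨insert a T.1, hsup T.2.1 (subset_insert a T.1), fun h => haS h.subset⟩

theorem adj_insertVertex (hsup : SupersetClosed F) {T : {T : Finset V // T ∈ F ∧ T ≠ S}} {a : V}
    (haT : a ∉ T.1) (haS : ¬insert a T.1 ⊆ S) :
    (TARGraphDel F S).Adj T (insertVertex hsup T a haS) := by
  change #(symmDiff T.1 (insert a T.1)) = 1
  rw [symmDiff_comm, card_symmDiff_insert_self haT]

theorem reachable_of_subset (hsup : SupersetClosed F) {T U : {T : Finset V // T ∈ F ∧ T ≠ S}}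
    (hTS : ¬T.1 ⊆ S) (hTU : T.1 ⊆ U.1) : (TARGraphDel F S).Reachable T U := by
  obtain hTU' | hTU' := hTU.eq_or_ssubset
  · rw [Subtype.ext hTU']
  obtain ⟨a, haU, haT⟩ := exists_of_ssubset hTU'
  have haS : ¬insert a T.1 ⊆ S := fun h => hTS ((subset_insert a T.1).trans h)
  have hinsU : insert a T.1 ⊆ U.1 := insert_subset haU hTU
  have hcard : #U.1 - #(insert a T.1) < #U.1 - #T.1 := by
    have := card_le_card hinsU
    rw [card_insert_of_notMem haT] at this ⊢
    omega
  exact (adj_insertVertex hsup haT haS).reachable.trans (reachable_of_subset hsup haS hinsU)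
termination_by #U.1 - #T.1

theorem reachable_univ (hsup : SupersetClosed F) (hSuniv : S ≠ univ) (huniv : univ ∈ F)
    (T : {T : Finset V // T ∈ F ∧ T ≠ S}) :
    (TARGraphDel F S).Reachable T ⟨univ, huniv, hSuniv.symm⟩ := by
  by_cases hTS : T.1 ⊆ S
  · obtain ⟨a, haS⟩ : ∃ a, a ∉ S := by simpa [eq_univ_iff_forall] using hSuniv
    have haS' : ¬insert a T.1 ⊆ S := fun h => haS (h (mem_insert_self a T.1))
    exact (adj_insertVertex hsup (fun h => haS (hTS h)) haS').reachable.trans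
      (reachable_of_subset hsup haS' (subset_univ _))
  · exact reachable_of_subset hsup hTS (subset_univ _)

end TARGraphDel

theorem stmt18_general (F : Finset (Finset V)) (hsup : SupersetClosed F)
    (S : Finset V) (hS : S ∈ F) (hSuniv : S ≠ Finset.univ) :
    (TARGraphDel F S).Connected := by
  have huniv : univ ∈ F := hsup hS (subset_univ S)
  have hreach := TARGraphDel.reachable_univ hsup hSuniv huniv
  exact (SimpleGraph.connected_iff _).mpr
    ⟨fun A B => (hreach A).trans (hreach B).symm, ⟨⟨univ, huniv, hSuniv.symm⟩⟩⟩

theorem stmt18 (F : Finset (Finset V)) (hne : F.Nonempty) (hsup : SupersetClosed F)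
    (S : Finset V) (hS : S ∈ F) (hSuniv : S ≠ Finset.univ) :
    (TARGraphDel F S).Connected :=
  stmt18_general F hsup S hS hSuniv
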